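/- arXiv:2511.12885 — 2 statements merged into one kernel-verified Lean document; each statement's English description precedes it below -/
import Mathlib

section
/- If Ax⋆ = b and x_k - x⋆ lies in the row space of A, then the maximal weighted residual value satisfies max_i |b⁽ⁱ⁾ - A⁽ⁱ⁾x_k|²/‖A⁽ⁱ⁾‖₂² ≥ (σ_r²(A)/‖A‖_F²)‖x_k - x⋆‖₂², where σ_r(A) is the smallest nonzero singular value. -/
/-!
Write `e = x_k - x⋆ = Aᵀu`. The vector `e` is orthogonal to `ker (AᵀA)`, so expanding it in an
orthonormal eigenbasis of `AᵀA` only involves nonzero eigenvalues, whence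
`σ_r² ‖e‖² ≤ ⟪AᵀA e, e⟫ = ‖A e‖²`. Since `b - A x_k = -A e`, each squared residual satisfies
`(A e)ᵢ² ≤ (max_i (A e)ᵢ² / ‖Aᵢ‖²) ‖Aᵢ‖²`, and summing over the rows gives `‖A e‖² ≤ max · ‖A‖_F²`.
-/

open Matrix

/-- Minimum nonzero eigenvalue of a square matrix. -/
noncomputable def lamMinNz {k : ℕ} (M : Matrix (Fin k) (Fin k) ℝ) : ℝ :=
  sInf {x : ℝ | Module.End.HasEigenvalue M.mulVecLin x ∧ x ≠ 0}

/-- Smallest nonzero singular value of `A`. -/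
noncomputable def sigmaR {m n : ℕ} (A : Matrix (Fin m) (Fin n) ℝ) : ℝ :=
  Real.sqrt (lamMinNz (Aᵀ * A))

open Module.End
open scoped RealInnerProductSpace

theorem LinearMap.IsSymmetric.mul_norm_sq_le_inner_of_mem_orthogonal_ker
    {E : Type*} [NormedAddCommGroup E] [InnerProductSpace ℝ E] [FiniteDimensional ℝ E]
    {T : E →ₗ[ℝ] E} (hT : T.IsSymmetric) {c : ℝ}
    (hc : ∀ μ : ℝ, HasEigenvalue T μ → μ ≠ 0 → c ≤ μ)
    {x : E} (hx : x ∈ (LinearMap.ker T)ᗮ) :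
    c * ‖x‖ ^ 2 ≤ ⟪T x, x⟫ := by
  set b := hT.eigenvectorBasis rfl
  set μ := hT.eigenvalues rfl
  have hTb (i) : ⟪T x, b i⟫ = μ i * ⟪b i, x⟫ := by
    rw [hT, hT.apply_eigenvectorBasis, real_inner_smul_right, real_inner_comm]
    rfl
  have hker (i) (hi : μ i = 0) : ⟪b i, x⟫ = 0 := by
    refine (Submodule.mem_orthogonal _ _).mp hx _ ?_
    simp only [LinearMap.mem_ker, b, hT.apply_eigenvectorBasis]
    simp [show hT.eigenvalues rfl i = 0 from hi]
  rw [← b.sum_sq_inner_right, ← b.sum_inner_mul_inner, Finset.mul_sum]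
  refine Finset.sum_le_sum fun i _ => ?_
  rw [hTb, mul_assoc, ← sq]
  by_cases hi : μ i = 0
  · simp [hker i hi]
  · exact mul_le_mul_of_nonneg_right (hc _ (hT.hasEigenvalue_eigenvalues rfl i) hi) (sq_nonneg _)

theorem Matrix.hasEigenvalue_toEuclideanLin_iff {𝕜 n : Type*} [RCLike 𝕜] [Fintype n]
    [DecidableEq n] (M : Matrix n n 𝕜) {μ : 𝕜} :
    HasEigenvalue (toEuclideanLin M) μ ↔ HasEigenvalue M.mulVecLin μ := by
  rw [hasEigenvalue_iff_mem_spectrum, hasEigenvalue_iff_mem_spectrum, spectrum_toLpLin,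
    ← spectrum_toLin']
  rfl

theorem Matrix.nonneg_of_hasEigenvalue_transpose_mul_self {m n : Type*} [Fintype m] [Fintype n]
    [DecidableEq n] (A : Matrix m n ℝ) {μ : ℝ} (hμ : HasEigenvalue (Aᵀ * A).mulVecLin μ) :
    0 ≤ μ := by
  have hpsd := posSemidef_conjTranspose_mul_self A
  rw [conjTranspose_eq_transpose_of_trivial] at hpsd
  refine (posSemidef_iff_isHermitian_and_spectrum_nonneg.mp hpsd).2 ?_
  rw [← spectrum_toLin']
  exact hasEigenvalue_iff_mem_spectrum.mp hμ

theorem Matrix.mem_orthogonal_ker_transpose_mul_self {m n : Type*} [Fintype m] [Fintype n]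
    [DecidableEq n] (A : Matrix m n ℝ) {e : n → ℝ} (he : e ∈ LinearMap.range Aᵀ.mulVecLin) :
    WithLp.toLp 2 e ∈ (LinearMap.ker (toEuclideanLin (Aᵀ * A)))ᗮ := by
  obtain ⟨u, rfl⟩ := he
  refine (Submodule.mem_orthogonal _ _).mpr fun w hw => ?_
  have hAw : A *ᵥ w.ofLp = 0 := by
    rw [← mulVecLin_apply, ← LinearMap.mem_ker, ← ker_mulVecLin_transpose_mul_self,
      LinearMap.mem_ker, mulVecLin_apply]
    exact congrArg WithLp.ofLp hw
  rw [EuclideanSpace.inner_toLp_toLp, star_trivial, mulVecLin_apply, dotProduct_comm,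
    dotProduct_mulVec, vecMul_transpose, hAw, zero_dotProduct]

section SmallestNonzeroEigenvalue

variable {m n : ℕ} (A : Matrix (Fin m) (Fin n) ℝ)

theorem lamMinNz_transpose_mul_self_nonneg : 0 ≤ lamMinNz (Aᵀ * A) :=
  Real.sInf_nonneg fun _ hμ => A.nonneg_of_hasEigenvalue_transpose_mul_self hμ.1

theorem lamMinNz_transpose_mul_self_le {μ : ℝ} (hμ : HasEigenvalue (Aᵀ * A).mulVecLin μ)
    (hμ0 : μ ≠ 0) : lamMinNz (Aᵀ * A) ≤ μ :=
  csInf_le ⟨0, fun _ hν => A.nonneg_of_hasEigenvalue_transpose_mul_self hν.1⟩ ⟨hμ, hμ0⟩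

theorem sigmaR_sq : sigmaR A ^ 2 = lamMinNz (Aᵀ * A) :=
  Real.sq_sqrt (lamMinNz_transpose_mul_self_nonneg A)

theorem lamMinNz_mul_sum_sq_le_sum_sq_mulVec {e : Fin n → ℝ}
    (he : e ∈ LinearMap.range Aᵀ.mulVecLin) :
    lamMinNz (Aᵀ * A) * ∑ j, e j ^ 2 ≤ ∑ i, (A *ᵥ e) i ^ 2 := by
  have hT : (toEuclideanLin (Aᵀ * A)).IsSymmetric :=
    isSymmetric_toEuclideanLin_iff.mpr (by simpa using isHermitian_conjTranspose_mul_self A)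
  have key := hT.mul_norm_sq_le_inner_of_mem_orthogonal_ker
    (fun μ hμ hμ0 => lamMinNz_transpose_mul_self_le A
      ((hasEigenvalue_toEuclideanLin_iff _).mp hμ) hμ0)
    (A.mem_orthogonal_ker_transpose_mul_self he)
  rw [EuclideanSpace.real_norm_sq_eq, toLpLin_toLp, EuclideanSpace.inner_toLp_toLp,
    star_trivial, toLin'_apply, ← mulVec_mulVec, dotProduct_mulVec,
    vecMul_transpose] at key
  simpa only [dotProduct, sq] using key

end SmallestNonzeroEigenvalue

theorem sum_le_iSup_div_mul_sum {ι : Type*} [Fintype ι] (a r : ι → ℝ) (hr : ∀ i, 0 ≤ r i)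
    (ha : ∀ i, r i = 0 → a i = 0) : ∑ i, a i ≤ (⨆ i, a i / r i) * ∑ i, r i := by
  rw [Finset.mul_sum]
  refine Finset.sum_le_sum fun i _ => ?_
  rcases (hr i).eq_or_lt with h | h
  · simp [ha i h.symm, ← h]
  · calc a i = a i / r i * r i := (div_mul_cancel₀ _ h.ne').symm
      _ ≤ _ := mul_le_mul_of_nonneg_right
        (le_ciSup (f := fun i => a i / r i) (Set.finite_range _).bddAbove i) h.le

theorem Matrix.sum_sq_mulVec_le_iSup_mul_sum_sq {m n : Type*} [Fintype m] [Fintype n]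
    (A : Matrix m n ℝ) (x : n → ℝ) :
    ∑ i, (A *ᵥ x) i ^ 2 ≤ (⨆ i, (A *ᵥ x) i ^ 2 / ∑ j, A i j ^ 2) * ∑ i, ∑ j, A i j ^ 2 := by
  refine sum_le_iSup_div_mul_sum _ _ (fun i => by positivity) fun i hi => ?_
  have hrow (j) : A i j = 0 := (pow_eq_zero_iff two_ne_zero).mp
    (congrFun ((Fintype.sum_eq_zero_iff_of_nonneg fun j => sq_nonneg (A i j)).mp hi) j)
  simp [mulVec, dotProduct, hrow]

theorem stmt_7_general {m n : ℕ} (A : Matrix (Fin m) (Fin n) ℝ) (b : Fin m → ℝ)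
    (xstar xk : Fin n → ℝ) (hsol : A.mulVec xstar = b)
    (hx : xk - xstar ∈ LinearMap.range Aᵀ.mulVecLin) :
    (⨆ i : Fin m, (b i - ∑ j, A i j * xk j)^2 / (∑ j, (A i j)^2)) ≥
      sigmaR A ^ 2 / (∑ i, ∑ j, (A i j)^2) * (∑ j, (xk j - xstar j)^2) := by
  have hres (i) : (b i - ∑ j, A i j * xk j) ^ 2 = (A *ᵥ (xk - xstar)) i ^ 2 := by
    rw [← hsol, mulVec_sub, Pi.sub_apply, ← neg_sub, neg_sq]
    rfl
  simp_rw [hres]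
  rw [ge_iff_le, sigmaR_sq, div_mul_eq_mul_div]
  refine div_le_of_le_mul₀ (by positivity) (Real.iSup_nonneg fun i => by positivity) ?_
  calc lamMinNz (Aᵀ * A) * ∑ j, (xk j - xstar j) ^ 2 ≤ ∑ i, (A *ᵥ (xk - xstar)) i ^ 2 :=
        lamMinNz_mul_sum_sq_le_sum_sq_mulVec A hx
    _ ≤ _ := A.sum_sq_mulVec_le_iSup_mul_sum_sq _

theorem stmt_7 {m n : ℕ} (A : Matrix (Fin m) (Fin n) ℝ) (b : Fin m → ℝ)
    (hA : A ≠ 0) (hrows : ∀ i, A i ≠ 0)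
    (xstar xk : Fin n → ℝ) (hsol : A.mulVec xstar = b)
    (hx : xk - xstar ∈ LinearMap.range Aᵀ.mulVecLin) :
    (⨆ i : Fin m, (b i - ∑ j, A i j * xk j)^2 / (∑ j, (A i j)^2)) ≥
      sigmaR A ^ 2 / (∑ i, ∑ j, (A i j)^2) * (∑ j, (xk j - xstar j)^2) :=
  stmt_7_general A b xstar xk hsol hx
end

section
/- Suppose ‖x_k' - x⋆‖₂² ≤ q'·p and ‖x_k - x⋆‖₂² ≤ q·p with q ≤ q' ≤ 1 and p ≥ 0, where q = 1 - σ_r²(A)/t and q' = 1 - (1-ε)²σ_r²(A)/t. Then ‖x_k' - x_k‖₂² ≤ (4 - (4 - 6ε + 3ε²)σ_r²(A)/t)·p. -/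
theorem Finset.sum_sq_sub_le {ι : Type*} (s : Finset ι) (a b c : ι → ℝ) :
    ∑ i ∈ s, (a i - b i) ^ 2 ≤ 2 * ∑ i ∈ s, (a i - c i) ^ 2 + 2 * ∑ i ∈ s, (b i - c i) ^ 2 := by
  simp only [Finset.mul_sum, ← Finset.sum_add_distrib, ← mul_add]
  gcongr with i
  calc (a i - b i) ^ 2 = ((a i - c i) + (c i - b i)) ^ 2 := by ring
    _ ≤ 2 * ((a i - c i) ^ 2 + (c i - b i) ^ 2) := add_sq_le
    _ = 2 * ((a i - c i) ^ 2 + (b i - c i) ^ 2) := by ring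

theorem stmt_12_general {n : ℕ} (xk xk' xstar : Fin n → ℝ)
    (ε t σr p : ℝ) (hε0 : 0 < ε) (hε1 : ε < 1) (ht : 0 < t)
    (hp : 0 ≤ p)
    (h1 : (∑ j, (xk' j - xstar j)^2) ≤ (1 - (1 - ε)^2 * σr ^ 2 / t) * p)
    (h2 : (∑ j, (xk j - xstar j)^2) ≤ (1 - σr ^ 2 / t) * p) :
    (∑ j, (xk' j - xk j)^2) ≤ (4 - (4 - 6 * ε + 3 * ε ^ 2) * σr ^ 2 / t) * p := by
  have slack : 0 ≤ ε * (2 - ε) * (σr ^ 2 / t) * p := by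
    have : 0 < 2 - ε := by linarith
    positivity
  calc (∑ j, (xk' j - xk j)^2)
      ≤ 2 * ∑ j, (xk' j - xstar j) ^ 2 + 2 * ∑ j, (xk j - xstar j) ^ 2 :=
        Finset.sum_sq_sub_le _ _ _ _
    _ ≤ 2 * ((1 - (1 - ε)^2 * σr ^ 2 / t) * p) + 2 * ((1 - σr ^ 2 / t) * p) := by gcongr
    _ = (4 - (4 - 6 * ε + 3 * ε ^ 2) * σr ^ 2 / t) * p - ε * (2 - ε) * (σr ^ 2 / t) * p := by
        ring
    _ ≤ (4 - (4 - 6 * ε + 3 * ε ^ 2) * σr ^ 2 / t) * p := sub_le_self _ slack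

theorem stmt_12 {n : ℕ} (xk xk' xstar : Fin n → ℝ)
    (ε t σr p : ℝ) (hε0 : 0 < ε) (hε1 : ε < 1) (ht : 0 < t)
    (hst : σr ^ 2 / t ≤ 1) (hp : 0 ≤ p)
    (h1 : (∑ j, (xk' j - xstar j)^2) ≤ (1 - (1 - ε)^2 * σr ^ 2 / t) * p)
    (h2 : (∑ j, (xk j - xstar j)^2) ≤ (1 - σr ^ 2 / t) * p) :
    (∑ j, (xk' j - xk j)^2) ≤ (4 - (4 - 6 * ε + 3 * ε ^ 2) * σr ^ 2 / t) * p :=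
  stmt_12_general xk xk' xstar ε t σr p hε0 hε1 ht hp h1 h2
end
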